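/- The polynomial e(e-βL)L + δcbL + γebL + λbc(c-αb) + M(ce - βcL - αbe) lies in the intersection of the three ideals (c,e), (b, e-βL), (c-αb, L) in ℚ[b,c,e,L,M,α,β,γ,δ,λ], but (for generic parameter values, e.g. over ℚ with the parameters as indeterminates) it does not lie in the product ideal (c,e)·(b,e-βL)·(c-αb,L). -/
import Mathlib


open MvPolynomial

/-- Variables in `ℚ[b,c,e,L,M,α,β,γ,δ,λ]`: `b = X 0`, `c = X 1`, `e = X 2`,
`L = X 3`, `M = X 4`, `α = X 5`, `β = X 6`, `γ = X 7`, `δ = X 8`, `λ = X 9`.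
The polynomial `F = e(e-βL)L + δcbL + γebL + λbc(c-αb) + M(ce - βcL - αbe)`
lies in the intersection of the three ideals `I_d = (c,e)`, `I_f = (b, e-βL)`,
`I_g = (c-αb, L)`, but not in their product `I_d·I_f·I_g`. -/
theorem stmt_18 :
    let b : MvPolynomial (Fin 10) ℚ := X 0
    let c : MvPolynomial (Fin 10) ℚ := X 1
    let e : MvPolynomial (Fin 10) ℚ := X 2
    let L : MvPolynomial (Fin 10) ℚ := X 3
    let M : MvPolynomial (Fin 10) ℚ := X 4
    let alpha : MvPolynomial (Fin 10) ℚ := X 5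
    let beta : MvPolynomial (Fin 10) ℚ := X 6
    let gamma : MvPolynomial (Fin 10) ℚ := X 7
    let delta : MvPolynomial (Fin 10) ℚ := X 8
    let lam : MvPolynomial (Fin 10) ℚ := X 9
    let Id : Ideal (MvPolynomial (Fin 10) ℚ) := Ideal.span {c, e}
    let If : Ideal (MvPolynomial (Fin 10) ℚ) := Ideal.span {b, e - beta * L}
    let Ig : Ideal (MvPolynomial (Fin 10) ℚ) := Ideal.span {c - alpha * b, L}
    let F := e * (e - beta * L) * L + delta * c * b * L + gamma * e * b * L +
      lam * b * c * (c - alpha * b) + M * (c * e - beta * c * L - alpha * b * e)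
    F ∈ Id ⊓ If ⊓ Ig ∧ F ∉ Id * If * Ig := by
  intro b c e L M alpha beta gamma delta lam Id If Ig F
  constructor
  · refine ⟨⟨?_, ?_⟩, ?_⟩
    · show F ∈ Ideal.span {c, e}
      rw [Ideal.mem_span_pair]
      exact ⟨delta * b * L + lam * b * (c - alpha * b) + M * (e - beta * L),
        (e - beta * L) * L + gamma * b * L - M * alpha * b, by ring⟩
    · show F ∈ Ideal.span {b, e - beta * L}
      rw [Ideal.mem_span_pair]
      exact ⟨delta * c * L + gamma * e * L + lam * c * (c - alpha * b) - M * alpha * e,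
        e * L + M * c, by ring⟩
    · show F ∈ Ideal.span {c - alpha * b, L}
      rw [Ideal.mem_span_pair]
      exact ⟨lam * b * c + M * e,
        e * (e - beta * L) + delta * c * b + gamma * e * b - M * beta * c, by ring⟩
  · intro hF
    -- scale b,c,e,L by the `Polynomial.X` variable
    set φ : MvPolynomial (Fin 10) ℚ →+* Polynomial (MvPolynomial (Fin 10) ℚ) :=
      (MvPolynomial.aeval (fun i : Fin 10 =>
        if (i : ℕ) < 4 then Polynomial.C (X i) * Polynomial.X else Polynomial.C (X i))).toRingHom
      with hφ
    have hφb : φ b = Polynomial.C b * Polynomial.X := by simp [hφ, b, show ((0:Fin 10):ℕ) < 4 from by decide]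
    have hφc : φ c = Polynomial.C c * Polynomial.X := by simp [hφ, c, show ((1:Fin 10):ℕ) < 4 from by decide]
    have hφe : φ e = Polynomial.C e * Polynomial.X := by simp [hφ, e, show ((2:Fin 10):ℕ) < 4 from by decide]
    have hφL : φ L = Polynomial.C L * Polynomial.X := by simp [hφ, L, show ((3:Fin 10):ℕ) < 4 from by decide]
    have hφM : φ M = Polynomial.C M := by simp [hφ, M, show ¬((4:Fin 10):ℕ) < 4 from by decide]
    have hφα : φ alpha = Polynomial.C alpha := by simp [hφ, alpha, show ¬((5:Fin 10):ℕ) < 4 from by decide]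
    have hφβ : φ beta = Polynomial.C beta := by simp [hφ, beta, show ¬((6:Fin 10):ℕ) < 4 from by decide]
    have hφγ : φ gamma = Polynomial.C gamma := by simp [hφ, gamma, show ¬((7:Fin 10):ℕ) < 4 from by decide]
    have hφδ : φ delta = Polynomial.C delta := by simp [hφ, delta, show ¬((8:Fin 10):ℕ) < 4 from by decide]
    have hφl : φ lam = Polynomial.C lam := by simp [hφ, lam, show ¬((9:Fin 10):ℕ) < 4 from by decide]
    set J : Ideal (Polynomial (MvPolynomial (Fin 10) ℚ)) := Ideal.span {Polynomial.X} with hJ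
    have hXspan : ∀ q : MvPolynomial (Fin 10) ℚ, Polynomial.C q * Polynomial.X ∈ J :=
      fun q => Ideal.mem_span_singleton.mpr ⟨Polynomial.C q, mul_comm _ _⟩
    have hd : Id.map φ ≤ J := by
      rw [Ideal.map_span, Ideal.span_le]
      rintro x ⟨p, hp, rfl⟩
      simp only [Set.mem_insert_iff, Set.mem_singleton_iff] at hp
      rcases hp with rfl | rfl
      · rw [hφc]; exact hXspan c
      · rw [hφe]; exact hXspan e
    have hf : If.map φ ≤ J := by
      rw [Ideal.map_span, Ideal.span_le]
      rintro x ⟨p, hp, rfl⟩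
      simp only [Set.mem_insert_iff, Set.mem_singleton_iff] at hp
      rcases hp with rfl | rfl
      · rw [hφb]; exact hXspan b
      · rw [map_sub, map_mul, hφe, hφβ, hφL,
          show Polynomial.C e * Polynomial.X - Polynomial.C beta * (Polynomial.C L * Polynomial.X)
            = Polynomial.C (e - beta * L) * Polynomial.X by
          rw [Polynomial.C_sub, Polynomial.C_mul]; ring]
        exact hXspan _
    have hg : Ig.map φ ≤ J := by
      rw [Ideal.map_span, Ideal.span_le]
      rintro x ⟨p, hp, rfl⟩
      simp only [Set.mem_insert_iff, Set.mem_singleton_iff] at hp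
      rcases hp with rfl | rfl
      · rw [map_sub, map_mul, hφc, hφα, hφb]
        rw [show Polynomial.C c * Polynomial.X - Polynomial.C alpha * (Polynomial.C b * Polynomial.X)
            = Polynomial.C (c - alpha * b) * Polynomial.X by
          rw [Polynomial.C_sub, Polynomial.C_mul]; ring]
        exact hXspan _
      · rw [hφL]; exact hXspan L
    have h3 : φ F ∈ Ideal.span {(Polynomial.X : Polynomial (MvPolynomial (Fin 10) ℚ)) ^ 3} := by
      have hmem := Ideal.mem_map_of_mem φ hF
      rw [Ideal.map_mul, Ideal.map_mul] at hmem
      have hle : Id.map φ * If.map φ * Ig.map φ ≤ J * J * J :=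
        Ideal.mul_mono (Ideal.mul_mono hd hf) hg
      have : φ F ∈ J * J * J := hle hmem
      rw [show J * J * J = J ^ 3 by ring, hJ, Ideal.span_singleton_pow] at this
      exact this
    obtain ⟨q, hq⟩ := Ideal.mem_span_singleton.mp h3
    have hFeq : φ F =
        Polynomial.C (e * (e - beta * L) * L + delta * c * b * L + gamma * e * b * L +
          lam * b * c * (c - alpha * b)) * Polynomial.X ^ 3
        + Polynomial.C (M * (c * e - beta * c * L - alpha * b * e)) * Polynomial.X ^ 2 := by
      simp only [F, map_add, map_mul, map_sub, hφb, hφc, hφe, hφL, hφM, hφα, hφβ, hφγ, hφδ, hφl,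
        Polynomial.C_add, Polynomial.C_mul, Polynomial.C_sub]
      ring
    have hcoeff : M * (c * e - beta * c * L - alpha * b * e) = 0 := by
      have h2 := congrArg (fun p => Polynomial.coeff p 2) (hFeq.symm.trans hq)
      simpa [mul_comm (Polynomial.X ^ 3) q, Polynomial.coeff_mul_X_pow',
        Polynomial.coeff_C_mul, Polynomial.coeff_X_pow] using h2
    have := congrArg (MvPolynomial.eval (fun i : Fin 10 =>
      if i.val = 1 ∨ i.val = 2 ∨ i.val = 4 then (1 : ℚ) else 0)) hcoeff
    simp [M, c, e, beta, L, alpha, b,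
      show ((0:Fin 10):ℕ) = 0 from rfl, show ((1:Fin 10):ℕ) = 1 from rfl,
      show ((2:Fin 10):ℕ) = 2 from rfl, show ((3:Fin 10):ℕ) = 3 from rfl,
      show ((4:Fin 10):ℕ) = 4 from rfl, show ((5:Fin 10):ℕ) = 5 from rfl,
      show ((6:Fin 10):ℕ) = 6 from rfl] at this
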